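/- The maximum over π ∈ S_n of the average of inv over the coset π·Z_n (where Z_n is the cyclic group generated by c_n = (1,2,…,n)) equals (2n−1)(n−1)/6; equivalently, max_{π ∈ S_n} Σ_{i=1}^n inv(π·c_n^i) = n·(2n−1)(n−1)/6. -/

import Mathlib

/-! Substituting `x ↦ x + i`, the `i`-th summand counts the pairs `(u, v)` with `π v < π u` that
are in increasing order after subtracting `i` modulo `n`; for a fixed pair this happens for
exactly `(u - v) mod n` values of `i`. So the sum is `∑ u, ∑_{π v < π u} (u - v) mod n`.
For fixed `u` the inner sum has `π u` distinct terms in `{0, …, n - 1}`, so it is at most the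
sum of the `π u` largest of these; summing over `u` gives `∑_{k < n} k²`. For the reversal the
inner terms are exactly those largest values. -/

open Finset

def inversions {n : ℕ} (π : Equiv.Perm (Fin n)) : ℕ :=
  (Finset.univ.filter (fun p : Fin n × Fin n => p.1 < p.2 ∧ π p.2 < π p.1)).card

def winv {n : ℕ} (π : Equiv.Perm (Fin n)) : ℤ :=
  ∑ p ∈ Finset.univ.filter (fun p : Fin n × Fin n => p.1 < p.2 ∧ π p.2 < π p.1),
    ((π p.1 : ℤ) - (π p.2 : ℤ))

def cwinv {n : ℕ} (π : Equiv.Perm (Fin n)) : ℤ :=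
  n * inversions π - 2 * winv π

open Fin.NatCast

theorem Finset.sum_le_sum_Ico_sub_card {n : ℕ} {s : Finset ℕ} (hs : s ⊆ range n) :
    ∑ x ∈ s, x ≤ ∑ j ∈ Ico (n - #s) n, j := by
  induction n generalizing s with
  | zero => simp_all
  | succ n ih =>
    rw [range_add_one] at hs
    by_cases hn : n ∈ s
    · have hs' := subset_insert_iff.mp hs
      have hcard : n + 1 - #s = n - #(s.erase n) := by
        rw [card_erase_of_mem hn]
        have := card_pos.mpr ⟨n, hn⟩
        omega
      rw [← add_sum_erase s _ hn, hcard, sum_Ico_succ_top (Nat.sub_le _ _), add_comm]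
      exact Nat.add_le_add_right (ih hs') n
    · have hs' := (subset_insert_iff_of_notMem hn).mp hs
      have hcard : n + 1 - #s = n - #s + 1 := by
        have := card_le_card hs'
        rw [card_range] at this
        omega
      calc ∑ x ∈ s, x ≤ ∑ j ∈ Ico (n - #s) n, j := ih hs'
        _ ≤ ∑ j ∈ Ico (n - #s) n, (j + 1) := sum_le_sum fun j _ => Nat.le_succ j
        _ = ∑ j ∈ Ico (n + 1 - #s) (n + 1), j := by
          rw [hcard]
          exact sum_Ico_add' (fun j => j) _ _ 1

theorem Finset.sum_range_sum_Ico_sub (n : ℕ) :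
    ∑ k ∈ range n, ∑ j ∈ Ico (n - k) n, j = ∑ j ∈ range n, j ^ 2 := by
  rw [sum_comm' (t' := range n) (s' := fun j => Ico (n - j) n)]
  · refine sum_congr rfl fun j hj => ?_
    rw [sum_const, Nat.card_Ico, smul_eq_mul, sq]
    have := mem_range.mp hj
    congr 1
    omega
  · intro k j
    simp only [mem_range, mem_Ico]
    omega

theorem six_mul_sum_range_sq (n : ℕ) :
    6 * ∑ k ∈ range n, (k : ℤ) ^ 2 = n * (2 * n - 1) * (n - 1) := by
  induction n with
  | zero => simp
  | succ n ih =>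
    rw [sum_range_succ, mul_add, ih]
    push_cast
    ring

theorem Finset.sum_Icc_one_eq_sum_range {M : Type*} [AddCommMonoid M] {n : ℕ} {f : ℕ → M}
    (hf : f n = f 0) : ∑ i ∈ Icc 1 n, f i = ∑ i ∈ range n, f i := by
  rw [← Finset.Ico_add_one_right_eq_Icc, sum_Ico_eq_sum_range, Nat.add_sub_cancel]
  cases n with
  | zero => simp
  | succ n =>
    rw [sum_range_succ, sum_range_succ' f, add_comm 1 n, hf]
    simp only [add_comm 1]

namespace Fin

theorem image_val_sub_Ioi {n : ℕ} (u : Fin n) :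
    (Ioi u).image (fun v => (u - v).val) = Ico (u.val + 1) n := by
  ext j
  simp only [mem_image, mem_Ioi, mem_Ico]
  constructor
  · rintro ⟨v, huv, rfl⟩
    rw [coe_sub_iff_lt.mpr huv]
    have := lt_def.mp huv
    omega
  · rintro ⟨hj, hjn⟩
    have hlt : u < ⟨u + n - j, by omega⟩ := lt_def.mpr (by simp only; omega)
    refine ⟨_, hlt, ?_⟩
    rw [coe_sub_iff_lt.mpr hlt]
    simp only
    omega

variable {n : ℕ} [NeZero n]

theorem val_sub_right_injective (u : Fin n) : Function.Injective fun v : Fin n => (u - v).val :=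
  val_injective.comp (sub_right_injective (b := u))

theorem card_filter_sub_lt_sub (u v : Fin n) : #{j : Fin n | u - j < v - j} = (u - v).val := by
  rw [← card_Iio (u - v)]
  refine card_equiv (Equiv.subLeft u) fun j => ?_
  simp only [mem_filter, mem_univ, true_and, mem_Iio, Equiv.subLeft_apply]
  rw [show v - j = u - j - (u - v) by abel]
  exact lt_sub_iff

theorem finRotate_pow_apply (i : ℕ) (x : Fin n) : (finRotate n ^ i) x = x + (i : Fin n) := by
  induction i with
  | zero => simp
  | succ i ih =>
    rw [pow_succ', Equiv.Perm.mul_apply, ih, finRotate_apply]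
    push_cast
    abel

end Fin

section

variable {n : ℕ}

theorem card_filter_apply_lt_apply (π : Equiv.Perm (Fin n)) (u : Fin n) :
    #{v | π v < π u} = (π u).val := by
  rw [← Fin.card_Iio]
  exact card_equiv π (by simp)

theorem sum_sum_Ico_sub_apply (π : Equiv.Perm (Fin n)) :
    ∑ u, ∑ j ∈ Ico (n - π u) n, j = ∑ k ∈ range n, k ^ 2 := by
  rw [Equiv.sum_comp π (fun k : Fin n => ∑ j ∈ Ico (n - k) n, j),
    Fin.sum_univ_eq_sum_range (fun k => ∑ j ∈ Ico (n - k) n, j), sum_range_sum_Ico_sub]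

variable [NeZero n]

theorem inversions_mul_finRotate_pow (π : Equiv.Perm (Fin n)) (i : ℕ) :
    inversions (π * finRotate n ^ i) =
      #{q : Fin n × Fin n | q.1 - i < q.2 - i ∧ π q.2 < π q.1} := by
  let e := Equiv.addRight (i : Fin n)
  refine card_equiv (e.prodCongr e) fun q => ?_
  simp [e, Fin.finRotate_pow_apply]

theorem sum_inversions_mul_finRotate_pow (π : Equiv.Perm (Fin n)) :
    ∑ i ∈ Icc 1 n, inversions (π * finRotate n ^ i) =
      ∑ u, ∑ v with π v < π u, (u - v).val := by
  have hperiod : finRotate n ^ n = 1 := by ext x; simp [Fin.finRotate_pow_apply]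
  calc ∑ i ∈ Icc 1 n, inversions (π * finRotate n ^ i)
      = ∑ j : Fin n, #{q : Fin n × Fin n | q.1 - j < q.2 - j ∧ π q.2 < π q.1} := by
        rw [sum_Icc_one_eq_sum_range (by simp [hperiod]), ← Fin.sum_univ_eq_sum_range]
        simp only [inversions_mul_finRotate_pow, Fin.cast_val_eq_self]
    _ = ∑ q : Fin n × Fin n, #{j : Fin n | q.1 - j < q.2 - j ∧ π q.2 < π q.1} := by
        simp only [card_filter]
        exact sum_comm
    _ = ∑ q : Fin n × Fin n with π q.2 < π q.1, (q.1 - q.2).val := by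
        rw [sum_filter]
        refine sum_congr rfl fun q _ => ?_
        split_ifs with h <;> simp [h, Fin.card_filter_sub_lt_sub]
    _ = ∑ u, ∑ v with π v < π u, (u - v).val := by
        rw [← univ_product_univ, sum_filter, sum_product]
        simp only [sum_filter]

theorem sum_val_sub_le (π : Equiv.Perm (Fin n)) (u : Fin n) :
    ∑ v with π v < π u, (u - v).val ≤ ∑ j ∈ Ico (n - π u) n, j := by
  have hinj := Fin.val_sub_right_injective u
  rw [← sum_image (f := fun j => j) hinj.injOn, ← card_filter_apply_lt_apply π u,
    ← card_image_of_injective _ hinj]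
  refine sum_le_sum_Ico_sub_card fun j hj => ?_
  obtain ⟨v, -, rfl⟩ := mem_image.mp hj
  exact mem_range.mpr (u - v).isLt

theorem sum_val_sub_revPerm (u : Fin n) :
    ∑ v with Fin.revPerm v < Fin.revPerm u, (u - v).val =
      ∑ j ∈ Ico (n - Fin.revPerm u) n, j := by
  have hfilter : ({v | Fin.revPerm v < Fin.revPerm u} : Finset (Fin n)) = Ioi u := by
    ext
    simp [Fin.rev_lt_rev]
  have hstart : n - (Fin.revPerm u).val = u.val + 1 := by
    simp only [Fin.revPerm_apply, Fin.val_rev]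
    omega
  rw [hfilter, hstart, ← Fin.image_val_sub_Ioi, sum_image (Fin.val_sub_right_injective u).injOn]

theorem sum_inversions_mul_finRotate_pow_le (π : Equiv.Perm (Fin n)) :
    ∑ i ∈ Icc 1 n, inversions (π * finRotate n ^ i) ≤ ∑ k ∈ range n, k ^ 2 := by
  rw [sum_inversions_mul_finRotate_pow, ← sum_sum_Ico_sub_apply π]
  exact sum_le_sum fun u _ => sum_val_sub_le π u

theorem sum_inversions_revPerm_mul_finRotate_pow :
    ∑ i ∈ Icc 1 n, inversions (Fin.revPerm * finRotate n ^ i) = ∑ k ∈ range n, k ^ 2 := by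
  rw [sum_inversions_mul_finRotate_pow, ← sum_sum_Ico_sub_apply Fin.revPerm]
  exact sum_congr rfl fun u _ => sum_val_sub_revPerm u

end

theorem max_avg_inv {n : ℕ} :
    (∀ π : Equiv.Perm (Fin n),
      6 * ∑ i ∈ Finset.Icc 1 n, (inversions (π * (finRotate n) ^ i) : ℤ)
        ≤ n * (2 * n - 1) * (n - 1)) ∧
    (∃ π : Equiv.Perm (Fin n),
      6 * ∑ i ∈ Finset.Icc 1 n, (inversions (π * (finRotate n) ^ i) : ℤ)
        = n * (2 * n - 1) * (n - 1)) := by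
  obtain rfl | _ := eq_zero_or_neZero n
  · exact ⟨fun π => by simp, ⟨1, by simp⟩⟩
  rw [← six_mul_sum_range_sq]
  refine ⟨fun π => ?_, ⟨Fin.revPerm, ?_⟩⟩ <;> norm_cast
  · exact Nat.mul_le_mul_left 6 (sum_inversions_mul_finRotate_pow_le π)
  · rw [sum_inversions_revPerm_mul_finRotate_pow]
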